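/- For every PDL⁻ formula φ: φ is valid on REL (i.e., ⟦φ⟧ˢ = W for every generalized structure S with universal relation U = W×W) if and only if φ is derivable in the Hilbert system H⁻ without the Löb axiom. -/

import Mathlib

/-! Statement 15: soundness and completeness of `H⁻` without the Löb axiom with
respect to REL (structures with the full universal relation). -/

/-- A generalized structure over term variables `A` and formula variables `P`,
with universe `W`. -/
structure GStruct (A P W : Type) where
  U : W → W → Prop
  rel : A → W → W → Prop
  rel_sub : ∀ a x y, rel a x y → U x y
  val : P → W → Prop

/-- The universal relation is a finite linear order (on a nonempty finite universe). -/
def FinLin {A P W : Type} (S : GStruct A P W) : Prop :=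
  Nonempty W ∧ Finite W ∧ (∀ x, S.U x x) ∧
    (∀ x y z, S.U x y → S.U y z → S.U x z) ∧
    (∀ x y, S.U x y → S.U y x → x = y) ∧ (∀ x y, S.U x y ∨ S.U y x)

/-- The universal relation is a finite strict linear order
(on a nonempty finite universe). -/
def SFinLin {A P W : Type} (S : GStruct A P W) : Prop :=
  Nonempty W ∧ Finite W ∧ (∀ x, ¬ S.U x x) ∧
    (∀ x y z, S.U x y → S.U y z → S.U x z) ∧
    (∀ x y, x ≠ y → S.U x y ∨ S.U y x)
mutual
  /-- Formulas of identity-free PDL (PDL⁻). -/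
  inductive MFml (A P : Type) : Type where
    | pv : P → MFml A P
    | imp : MFml A P → MFml A P → MFml A P
    | fls : MFml A P
    | box : MTrm A P → MFml A P → MFml A P
  /-- Terms of identity-free PDL (PDL⁻). -/
  inductive MTrm (A P : Type) : Type where
    | tv : A → MTrm A P
    | comp : MTrm A P → MTrm A P → MTrm A P
    | union : MTrm A P → MTrm A P → MTrm A P
    | plus : MTrm A P → MTrm A P
    | testL : MFml A P → MTrm A P → MTrm A P
    | testR : MTrm A P → MFml A P → MTrm A P
end

namespace MFml
/-- ¬φ := φ → F -/
def neg {A P : Type} (φ : MFml A P) : MFml A P := .imp φ .fls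
/-- T := ¬F -/
def tru {A P : Type} : MFml A P := neg .fls
/-- φ ∨ ψ := ¬φ → ψ -/
def or {A P : Type} (φ ψ : MFml A P) : MFml A P := .imp (neg φ) ψ
/-- φ ∧ ψ := ¬(¬φ ∨ ¬ψ) -/
def and {A P : Type} (φ ψ : MFml A P) : MFml A P := neg (or (neg φ) (neg ψ))
/-- φ ↔ ψ := (φ → ψ) ∧ (ψ → φ) -/
def iff {A P : Type} (φ ψ : MFml A P) : MFml A P := and (.imp φ ψ) (.imp ψ φ)
/-- ⟨e⟩φ := ¬[e]¬φ -/
def dia {A P : Type} (e : MTrm A P) (φ : MFml A P) : MFml A P := neg (.box e (neg φ))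
end MFml

mutual
  /-- Semantics of PDL⁻ formulas on a generalized structure. -/
  def msemF {A P W : Type} (S : GStruct A P W) : MFml A P → W → Prop
    | .pv p, x => S.val p x
    | .imp φ ψ, x => msemF S φ x → msemF S ψ x
    | .fls, _ => False
    | .box e φ, x => ∀ y, msemT S e x y → msemF S φ y
  /-- Semantics of PDL⁻ terms on a generalized structure. -/
  def msemT {A P W : Type} (S : GStruct A P W) : MTrm A P → W → W → Prop
    | .tv a, x, y => S.rel a x y
    | .comp e f, x, z => ∃ y, msemT S e x y ∧ msemT S f y z
    | .union e f, x, y => msemT S e x y ∨ msemT S f x y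
    | .plus e, x, y => Relation.TransGen (fun u v => msemT S e u v) x y
    | .testL ψ e, x, y => msemF S ψ x ∧ msemT S e x y
    | .testR e ψ, x, y => msemT S e x y ∧ msemF S ψ y
end

/-- Propositional formulas over variables `V`. -/
inductive PropF (V : Type) : Type where
  | pv : V → PropF V
  | imp : PropF V → PropF V → PropF V
  | fls : PropF V

/-- Evaluation of a propositional formula under a valuation. -/
def PropF.eval {V : Type} (v : V → Prop) : PropF V → Prop
  | .pv p => v p
  | .imp a b => PropF.eval v a → PropF.eval v b
  | .fls => False

/-- Substitution instance of a propositional formula, substituting PDL⁻ formulas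
for the propositional variables. -/
def PropF.inst {V A P : Type} (σ : V → MFml A P) : PropF V → MFml A P
  | .pv p => σ p
  | .imp a b => .imp (PropF.inst σ a) (PropF.inst σ b)
  | .fls => .fls

/-- The Hilbert system `H⁻` for PDL⁻ *without* the Löb axiom. -/
inductive MProofNL {A P : Type} : MFml A P → Prop where
  /-- modus ponens -/
  | mp {φ ψ : MFml A P} : MProofNL φ → MProofNL (.imp φ ψ) → MProofNL ψ
  /-- necessitation -/
  | nec {φ : MFml A P} (e : MTrm A P) : MProofNL φ → MProofNL (.box e φ)
  /-- (Prop): all substitution-instances of valid propositional formulas -/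
  | prop {V : Type} (χ : PropF V) (hval : ∀ v, PropF.eval v χ) (σ : V → MFml A P) :
      MProofNL (PropF.inst σ χ)
  /-- (;) -/
  | compAx (e f : MTrm A P) (φ : MFml A P) :
      MProofNL (MFml.iff (.box (.comp e f) φ) (.box e (.box f φ)))
  /-- (+) -/
  | unionAx (e f : MTrm A P) (φ : MFml A P) :
      MProofNL (MFml.iff (.box (.union e f) φ) (MFml.and (.box e φ) (.box f φ)))
  /-- (⁺) -/
  | plusAx (e : MTrm A P) (φ : MFml A P) :
      MProofNL (MFml.iff (.box (.plus e) φ) (MFml.and (.box e φ) (.box e (.box (.plus e) φ))))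
  /-- (⁺-Ind) -/
  | plusInd (e : MTrm A P) (φ : MFml A P) :
      MProofNL (.imp (MFml.and (.box e φ) (.box (.plus e) (.imp φ (.box e φ)))) (.box (.plus e) φ))
  /-- (?-L) -/
  | testLAx (ψ : MFml A P) (e : MTrm A P) (φ : MFml A P) :
      MProofNL (MFml.iff (.box (.testL ψ e) φ) (.imp ψ (.box e φ)))
  /-- (?-R) -/
  | testRAx (e : MTrm A P) (ψ φ : MFml A P) :
      MProofNL (MFml.iff (.box (.testR e ψ) φ) (.box e (.imp ψ φ)))
  /-- (K) -/
  | kAx (e : MTrm A P) (φ ψ : MFml A P) :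
      MProofNL (.imp (.box e (.imp φ ψ)) (.imp (.box e φ) (.box e ψ)))

/-!
Completeness is the Kozen–Parikh argument. If `φ` is not derivable, it fails in a finite
canonical model whose worlds are the atoms over the Fischer–Ladner closure of `φ`: the consistent
conjunctions containing each formula of the closure or its negation. An atomic term `a` relates
`X` to `Y` when `X ∧ ⟨a⟩Y` is consistent, and the universal relation is total, so the model
lies in REL. The truth lemma is proved simultaneously with two program lemmas for every term
`e`: the boxes `[e]χ` of an atom `X` hold at its `e`-successors, and `X` derives `[e]` of the
disjunction of its `e`-successors. For `e⁺` the latter is an instance of `⁺-Ind` with that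
disjunction as invariant. Propositional reasoning inside `H⁻` goes through (Prop), as classical
truth with propositional variables and boxed formulas read as atoms.
-/

open MFml

section Semantics

variable {A P W : Type} (S : GStruct A P W) {φ ψ : MFml A P} {x : W}

@[simp] theorem msemF_neg : msemF S φ.neg x ↔ ¬ msemF S φ x := by simp [neg, msemF]

@[simp] theorem msemF_or : msemF S (φ.or ψ) x ↔ msemF S φ x ∨ msemF S ψ x := by
  simp [MFml.or]; tauto

@[simp] theorem msemF_and : msemF S (φ.and ψ) x ↔ msemF S φ x ∧ msemF S ψ x := by
  simp [MFml.and]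

@[simp] theorem msemF_iff : msemF S (φ.iff ψ) x ↔ (msemF S φ x ↔ msemF S ψ x) := by
  simp [MFml.iff, msemF, iff_def]

theorem msemF_propF_inst {V : Type} (σ : V → MFml A P) (χ : PropF V) :
    msemF S (χ.inst σ) x ↔ χ.eval (fun p => msemF S (σ p) x) := by
  induction χ <;> simp_all [PropF.inst, PropF.eval, msemF]

end Semantics

theorem MProofNL.sound {A P : Type} {φ : MFml A P} (h : MProofNL φ) {W : Type}
    (S : GStruct A P W) (x : W) : msemF S φ x := by
  induction h generalizing x with
  | mp _ _ ih₁ ih₂ => exact ih₂ x (ih₁ x)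
  | nec _ _ ih => exact fun y _ => ih y
  | prop χ hval σ => exact (msemF_propF_inst S σ χ).2 (hval _)
  | compAx | unionAx | testLAx | testRAx | kAx => simp [msemF, msemT] <;> aesop
  | plusAx e φ =>
    simp only [msemF_iff, msemF_and, msemF, msemT]
    exact ⟨fun h => ⟨fun y hy => h y (.single hy), fun y hy z hz => h z (.head hy hz)⟩,
      fun ⟨hbase, hstep⟩ z hz => by
        obtain ⟨y, hy, hyz⟩ := Relation.TransGen.head'_iff.1 hz
        rcases Relation.reflTransGen_iff_eq_or_transGen.1 hyz with rfl | hyz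
        exacts [hbase _ hy, hstep y hy z hyz]⟩
  | plusInd e φ =>
    simp only [msemF, msemF_and, msemT]
    rintro ⟨hbase, hstep⟩ y hy
    induction hy with
    | single h => exact hbase _ h
    | tail hxy hyz ih => exact hstep _ hxy ih _ hyz

namespace MFml

variable {A P : Type}

def evalAtoms (v : MFml A P → Prop) : MFml A P → Prop
  | .pv p => v (.pv p)
  | .imp φ ψ => evalAtoms v φ → evalAtoms v ψ
  | .fls => False
  | .box e φ => v (.box e φ)

def skeleton : MFml A P → PropF (MFml A P)
  | .pv p => .pv (.pv p)
  | .imp φ ψ => .imp φ.skeleton ψ.skeleton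
  | .fls => .fls
  | .box e φ => .pv (.box e φ)

theorem inst_skeleton : ∀ φ : MFml A P, φ.skeleton.inst id = φ
  | .pv _ | .fls | .box _ _ => rfl
  | .imp φ ψ => by rw [skeleton, PropF.inst, inst_skeleton φ, inst_skeleton ψ]

theorem eval_skeleton (v : MFml A P → Prop) :
    ∀ φ : MFml A P, φ.skeleton.eval v ↔ φ.evalAtoms v
  | .pv _ | .fls | .box _ _ => Iff.rfl
  | .imp φ ψ => by rw [skeleton, PropF.eval, evalAtoms, eval_skeleton v φ, eval_skeleton v ψ]

section evalAtoms

variable {v : MFml A P → Prop} {φ ψ : MFml A P}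

@[simp] theorem evalAtoms_imp : (φ.imp ψ).evalAtoms v ↔ (φ.evalAtoms v → ψ.evalAtoms v) :=
  Iff.rfl

@[simp] theorem evalAtoms_fls : (fls : MFml A P).evalAtoms v ↔ False := Iff.rfl

@[simp] theorem evalAtoms_neg : φ.neg.evalAtoms v ↔ ¬ φ.evalAtoms v := Iff.rfl

@[simp] theorem evalAtoms_tru : (tru : MFml A P).evalAtoms v := id

@[simp] theorem evalAtoms_or : (φ.or ψ).evalAtoms v ↔ φ.evalAtoms v ∨ ψ.evalAtoms v := by
  simp [MFml.or, or_iff_not_imp_left]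

@[simp] theorem evalAtoms_and : (φ.and ψ).evalAtoms v ↔ φ.evalAtoms v ∧ ψ.evalAtoms v := by
  simp [MFml.and]

@[simp] theorem evalAtoms_iff :
    (φ.iff ψ).evalAtoms v ↔ (φ.evalAtoms v ↔ ψ.evalAtoms v) := by
  simp [MFml.iff, iff_def]

end evalAtoms

def bigConj (L : List (MFml A P)) : MFml A P := L.foldr MFml.and tru

def bigDisj (L : List (MFml A P)) : MFml A P := L.foldr MFml.or fls

@[simp] theorem evalAtoms_bigConj {v : MFml A P → Prop} (L : List (MFml A P)) :
    (bigConj L).evalAtoms v ↔ ∀ φ ∈ L, φ.evalAtoms v := by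
  induction L <;> simp_all [bigConj]

@[simp] theorem evalAtoms_bigDisj {v : MFml A P → Prop} (L : List (MFml A P)) :
    (bigDisj L).evalAtoms v ↔ ∃ φ ∈ L, φ.evalAtoms v := by
  induction L <;> simp_all [bigDisj]

def Consistent (φ : MFml A P) : Prop := ¬ MProofNL φ.neg

end MFml

namespace MProofNL

variable {A P : Type} {φ ψ χ : MFml A P}

theorem of_taut (h : ∀ v, φ.evalAtoms v) : MProofNL φ := by
  simpa only [inst_skeleton] using
    MProofNL.prop φ.skeleton (fun v => (eval_skeleton v φ).2 (h v)) id

theorem of_taut₁ (hφ : MProofNL φ) (h : ∀ v, φ.evalAtoms v → ψ.evalAtoms v) :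
    MProofNL ψ :=
  hφ.mp (of_taut h)

theorem of_taut₂ (hφ : MProofNL φ) (hψ : MProofNL ψ)
    (h : ∀ v, φ.evalAtoms v → ψ.evalAtoms v → χ.evalAtoms v) : MProofNL χ :=
  hψ.mp (hφ.mp (of_taut (φ := φ.imp (ψ.imp χ)) h))

theorem bigConj_of_forall {Γ : List (MFml A P)} (h : ∀ γ ∈ Γ, MProofNL γ) :
    MProofNL (bigConj Γ) := by
  induction Γ with
  | nil => exact of_taut fun _ => evalAtoms_tru
  | cons γ Γ ih =>
    exact of_taut₂ (h γ (.head _)) (ih fun δ hδ => h δ (.tail _ hδ))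
      fun _ hγ hΓ => evalAtoms_and.2 ⟨hγ, hΓ⟩

theorem of_taut_of_forall {Γ : List (MFml A P)} (hΓ : ∀ γ ∈ Γ, MProofNL γ)
    (h : ∀ v, (∀ γ ∈ Γ, γ.evalAtoms v) → φ.evalAtoms v) : MProofNL φ :=
  of_taut₁ (bigConj_of_forall hΓ) fun v hv => h v ((evalAtoms_bigConj Γ).1 hv)

theorem imp_trans (h₁ : MProofNL (φ.imp ψ)) (h₂ : MProofNL (ψ.imp χ)) :
    MProofNL (φ.imp χ) :=
  of_taut₂ h₁ h₂ fun _ h₁ h₂ h => h₂ (h₁ h)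

theorem imp_and (h₁ : MProofNL (φ.imp ψ)) (h₂ : MProofNL (φ.imp χ)) :
    MProofNL (φ.imp (ψ.and χ)) :=
  of_taut₂ h₁ h₂ fun _ h₁ h₂ h => evalAtoms_and.2 ⟨h₁ h, h₂ h⟩

theorem imp_and_left (h : MProofNL (φ.imp (ψ.and χ))) : MProofNL (φ.imp ψ) :=
  of_taut₁ h fun _ h hφ => (evalAtoms_and.1 (h hφ)).1

theorem imp_and_right (h : MProofNL (φ.imp (ψ.and χ))) : MProofNL (φ.imp χ) :=
  of_taut₁ h fun _ h hφ => (evalAtoms_and.1 (h hφ)).2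

theorem iff_mp (h : MProofNL (φ.iff ψ)) : MProofNL (φ.imp ψ) :=
  of_taut₁ h fun _ h => (evalAtoms_iff.1 h).1

theorem iff_mpr (h : MProofNL (φ.iff ψ)) : MProofNL (ψ.imp φ) :=
  of_taut₁ h fun _ h => (evalAtoms_iff.1 h).2

theorem box_mono (e : MTrm A P) (h : MProofNL (φ.imp ψ)) :
    MProofNL ((box e φ).imp (box e ψ)) :=
  (nec e h).mp (kAx e φ ψ)

theorem imp_box_bigConj (e : MTrm A P) {Γ : List (MFml A P)}
    (h : ∀ γ ∈ Γ, MProofNL (φ.imp (box e γ))) : MProofNL (φ.imp (box e (bigConj Γ))) := by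
  induction Γ with
  | nil => exact of_taut₁ (nec e (of_taut fun _ => evalAtoms_tru)) fun _ h _ => h
  | cons γ Γ ih =>
    have hand : MProofNL ((box e γ).imp ((box e (bigConj Γ)).imp (box e (bigConj (γ :: Γ))))) :=
      imp_trans (box_mono e (of_taut (φ := γ.imp ((bigConj Γ).imp (γ.and (bigConj Γ))))
        fun _ hγ hΓ => evalAtoms_and.2 ⟨hγ, hΓ⟩)) (kAx e _ _)
    exact of_taut₂ (imp_trans (h γ (.head _)) hand) (ih fun δ hδ => h δ (.tail _ hδ))
      fun _ h₁ h₂ hφ => h₁ hφ (h₂ hφ)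

theorem imp_box_of_forall (e : MTrm A P) {Γ : List (MFml A P)}
    (hΓ : ∀ γ ∈ Γ, MProofNL (φ.imp (box e γ)))
    (h : ∀ v, (∀ γ ∈ Γ, γ.evalAtoms v) → ψ.evalAtoms v) :
    MProofNL (φ.imp (box e ψ)) :=
  imp_trans (imp_box_bigConj e hΓ)
    (box_mono e (of_taut fun v hv => h v ((evalAtoms_bigConj Γ).1 hv)))

end MProofNL

open scoped Classical

/-! ### Fischer–Ladner closure -/

namespace MFml

variable {A P : Type}

/-- The formulas that a Fischer–Ladner closed set must contain along with `φ`. -/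
noncomputable def flSucc : MFml A P → Finset (MFml A P)
  | .pv _ | .fls => ∅
  | .imp φ ψ => {φ, ψ}
  | .box (.tv _) χ => {χ}
  | .box (.comp e f) χ => {χ, box e (box f χ), box f χ}
  | .box (.union e f) χ => {χ, box e χ, box f χ}
  | .box (.plus e) χ => {χ, box e χ, box e (box (.plus e) χ)}
  | .box (.testL ψ e) χ => {χ, ψ, box e χ}
  | .box (.testR e ψ) χ => {χ, box e (imp ψ χ), imp ψ χ}

def FLClosed (Φ : Finset (MFml A P)) : Prop := ∀ φ ∈ Φ, φ.flSucc ⊆ Φ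

theorem FLClosed.mem {Φ : Finset (MFml A P)} {φ ψ : MFml A P} (hΦ : FLClosed Φ)
    (hφ : φ ∈ Φ) (hψ : ψ ∈ φ.flSucc) : ψ ∈ Φ :=
  hΦ φ hφ hψ

theorem mem_flSucc_box (e : MTrm A P) (χ : MFml A P) : χ ∈ (box e χ).flSucc := by
  cases e <;> simp [flSucc]

mutual
noncomputable def flClosure : MFml A P → Finset (MFml A P)
  | .pv p => {.pv p}
  | .fls => {.fls}
  | .imp φ ψ => insert (.imp φ ψ) (flClosure φ ∪ flClosure ψ)
  | .box e χ => flBoxClosure e χ ∪ flClosure χ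
/-- The Fischer–Ladner closure of `[e]χ`, without the part generated by `χ` alone. -/
noncomputable def flBoxClosure : MTrm A P → MFml A P → Finset (MFml A P)
  | .tv a, χ => {box (.tv a) χ}
  | .comp e f, χ => insert (box (.comp e f) χ) (flBoxClosure e (box f χ) ∪ flBoxClosure f χ)
  | .union e f, χ => insert (box (.union e f) χ) (flBoxClosure e χ ∪ flBoxClosure f χ)
  | .plus e, χ =>
    insert (box (.plus e) χ) (flBoxClosure e (box (.plus e) χ) ∪ flBoxClosure e χ)
  | .testL ψ e, χ => insert (box (.testL ψ e) χ) (flClosure ψ ∪ flBoxClosure e χ)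
  | .testR e ψ, χ =>
    insert (box (.testR e ψ) χ) (insert (imp ψ χ) (flBoxClosure e (imp ψ χ) ∪ flClosure ψ))
end

theorem mem_flBoxClosure_self (e : MTrm A P) (χ : MFml A P) : box e χ ∈ flBoxClosure e χ := by
  cases e <;> simp [flBoxClosure]

theorem mem_flClosure_self (φ : MFml A P) : φ ∈ flClosure φ := by
  cases φ <;> simp [flClosure, mem_flBoxClosure_self]

mutual
theorem flClosed_flClosure : ∀ φ : MFml A P, FLClosed (flClosure φ)
  | .pv p => by simp [FLClosed, flClosure, flSucc]
  | .fls => by simp [FLClosed, flClosure, flSucc]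
  | .imp φ ψ => by
    have ihφ := flClosed_flClosure φ
    have ihψ := flClosed_flClosure ψ
    have := mem_flClosure_self φ; have := mem_flClosure_self ψ
    intro ξ hξ x hx
    rw [flClosure] at hξ ⊢
    simp only [Finset.mem_insert, Finset.mem_union] at hξ ⊢
    rcases hξ with rfl | hξ | hξ
    · simp only [flSucc, Finset.mem_insert, Finset.mem_singleton] at hx; grind
    · have := ihφ ξ hξ hx; grind
    · have := ihψ ξ hξ hx; grind
  | .box e χ => by
    have ihe := flSucc_subset_of_mem_flBoxClosure e χ
    have ihχ := flClosed_flClosure χ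
    have := mem_flClosure_self χ
    intro ξ hξ x hx
    rw [flClosure] at hξ ⊢
    simp only [Finset.mem_union] at hξ ⊢
    rcases hξ with hξ | hξ
    · have := ihe ξ hξ hx; simp only [Finset.mem_insert] at this; grind
    · have := ihχ ξ hξ hx; grind

theorem flSucc_subset_of_mem_flBoxClosure :
    ∀ (e : MTrm A P) (χ : MFml A P), ∀ ξ ∈ flBoxClosure e χ,
      ξ.flSucc ⊆ insert χ (flBoxClosure e χ)
  | .tv a, χ => by simp [flBoxClosure, flSucc]
  | .comp e f, χ => by
    have ihe := flSucc_subset_of_mem_flBoxClosure e (box f χ)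
    have ihf := flSucc_subset_of_mem_flBoxClosure f χ
    have := mem_flBoxClosure_self e (box f χ); have := mem_flBoxClosure_self f χ
    intro ξ hξ x hx
    rw [flBoxClosure] at hξ ⊢
    simp only [Finset.mem_insert, Finset.mem_union] at hξ ⊢
    rcases hξ with rfl | hξ | hξ
    · simp only [flSucc, Finset.mem_insert, Finset.mem_singleton] at hx; grind
    · have := ihe ξ hξ hx; grind
    · have := ihf ξ hξ hx; grind
  | .union e f, χ => by
    have ihe := flSucc_subset_of_mem_flBoxClosure e χ
    have ihf := flSucc_subset_of_mem_flBoxClosure f χ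
    have := mem_flBoxClosure_self e χ; have := mem_flBoxClosure_self f χ
    intro ξ hξ x hx
    rw [flBoxClosure] at hξ ⊢
    simp only [Finset.mem_insert, Finset.mem_union] at hξ ⊢
    rcases hξ with rfl | hξ | hξ
    · simp only [flSucc, Finset.mem_insert, Finset.mem_singleton] at hx; grind
    · have := ihe ξ hξ hx; grind
    · have := ihf ξ hξ hx; grind
  | .plus e, χ => by
    have ihe := flSucc_subset_of_mem_flBoxClosure e χ
    have ihe' := flSucc_subset_of_mem_flBoxClosure e (box (.plus e) χ)
    have := mem_flBoxClosure_self e χ; have := mem_flBoxClosure_self e (box (.plus e) χ)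
    intro ξ hξ x hx
    rw [flBoxClosure] at hξ ⊢
    simp only [Finset.mem_insert, Finset.mem_union] at hξ ⊢
    rcases hξ with rfl | hξ | hξ
    · simp only [flSucc, Finset.mem_insert, Finset.mem_singleton] at hx; grind
    · have := ihe' ξ hξ hx; grind
    · have := ihe ξ hξ hx; grind
  | .testL ψ e, χ => by
    have ihψ := flClosed_flClosure ψ
    have ihe := flSucc_subset_of_mem_flBoxClosure e χ
    have := mem_flClosure_self ψ; have := mem_flBoxClosure_self e χ
    intro ξ hξ x hx
    rw [flBoxClosure] at hξ ⊢
    simp only [Finset.mem_insert, Finset.mem_union] at hξ ⊢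
    rcases hξ with rfl | hξ | hξ
    · simp only [flSucc, Finset.mem_insert, Finset.mem_singleton] at hx; grind
    · have := ihψ ξ hξ hx; grind
    · have := ihe ξ hξ hx; grind
  | .testR e ψ, χ => by
    have ihψ := flClosed_flClosure ψ
    have ihe := flSucc_subset_of_mem_flBoxClosure e (imp ψ χ)
    have := mem_flClosure_self ψ; have := mem_flBoxClosure_self e (imp ψ χ)
    intro ξ hξ x hx
    rw [flBoxClosure] at hξ ⊢
    simp only [Finset.mem_insert, Finset.mem_union] at hξ ⊢
    rcases hξ with rfl | rfl | hξ | hξ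
    · simp only [flSucc, Finset.mem_insert, Finset.mem_singleton] at hx; grind
    · simp only [flSucc, Finset.mem_insert, Finset.mem_singleton] at hx; grind
    · have := ihe ξ hξ hx; grind
    · have := ihψ ξ hξ hx; grind
end

variable {Φ : Finset (MFml A P)}

/-! ### Atoms -/

noncomputable def litConj (Φ s : Finset (MFml A P)) : MFml A P :=
  bigConj (Φ.toList.map fun ψ => if ψ ∈ s then ψ else ψ.neg)

theorem evalAtoms_litConj {s : Finset (MFml A P)} {v : MFml A P → Prop} :
    (litConj Φ s).evalAtoms v ↔ ∀ ψ ∈ Φ, (ψ.evalAtoms v ↔ ψ ∈ s) := by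
  simp only [litConj, evalAtoms_bigConj, List.mem_map, Finset.mem_toList]
  refine ⟨fun h ψ hψ => ?_, fun h _ ⟨ψ, hψ, hlit⟩ => ?_⟩
  · have := h _ ⟨ψ, hψ, rfl⟩
    split_ifs at this with hs <;> simp_all
  · subst hlit
    split_ifs with hs <;> simp_all

@[ext]
structure Atom (Φ : Finset (MFml A P)) where
  carrier : Finset (MFml A P)
  subset : carrier ⊆ Φ
  consistent : Consistent (litConj Φ carrier)

namespace Atom

instance : Finite (Atom Φ) :=
  Finite.of_injective (fun X => (⟨X.carrier, Finset.mem_powerset.2 X.subset⟩ : Φ.powerset))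
    fun _ _ h => Atom.ext (congrArg Subtype.val h)

noncomputable instance : Fintype (Atom Φ) := Fintype.ofFinite _

noncomputable def fml (X : Atom Φ) : MFml A P := litConj Φ X.carrier

variable (X : Atom Φ) {φ ψ : MFml A P}

theorem imp_of_mem (h : ψ ∈ X.carrier) : MProofNL (X.fml.imp ψ) :=
  .of_taut fun _ hX => (evalAtoms_litConj.1 hX ψ (X.subset h)).2 h

theorem imp_neg_of_not_mem (hψ : ψ ∈ Φ) (h : ψ ∉ X.carrier) : MProofNL (X.fml.imp ψ.neg) :=
  .of_taut fun _ hX hψX => h ((evalAtoms_litConj.1 hX ψ hψ).1 hψX)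

theorem mem_iff_imp (hψ : ψ ∈ Φ) : ψ ∈ X.carrier ↔ MProofNL (X.fml.imp ψ) := by
  refine ⟨X.imp_of_mem, fun h => by_contra fun hn => X.consistent ?_⟩
  exact .of_taut₂ h (X.imp_neg_of_not_mem hψ hn) fun _ h₁ h₂ hX => h₂ hX (h₁ hX)

theorem mem_of_mem_of_imp (hφ : φ ∈ X.carrier) (himp : MProofNL (φ.imp ψ)) (hψ : ψ ∈ Φ) :
    ψ ∈ X.carrier :=
  (X.mem_iff_imp hψ).2 ((X.imp_of_mem hφ).imp_trans himp)

theorem imp_imp_of_mem {δ : MFml A P} (hψ : ψ ∈ Φ)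
    (h : ψ ∈ X.carrier → MProofNL (X.fml.imp δ)) :
    MProofNL (X.fml.imp (ψ.imp δ)) := by
  by_cases hψX : ψ ∈ X.carrier
  · exact .of_taut₁ (h hψX) fun _ h hX _ => h hX
  · exact .of_taut₁ (X.imp_neg_of_not_mem hψ hψX) fun _ h hX hψ => (h hX hψ).elim

theorem fls_not_mem : fls ∉ X.carrier := fun h =>
  X.consistent (.of_taut₁ (X.imp_of_mem h) fun _ h hX => h hX)

theorem imp_mem_iff (himp : φ.imp ψ ∈ Φ) (hφ : φ ∈ Φ) (hψ : ψ ∈ Φ) :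
    φ.imp ψ ∈ X.carrier ↔ (φ ∈ X.carrier → ψ ∈ X.carrier) := by
  rw [X.mem_iff_imp himp]
  refine ⟨fun h hφX => (X.mem_iff_imp hψ).2 ?_,
    fun h => X.imp_imp_of_mem hφ fun hφX => X.imp_of_mem (h hφX)⟩
  exact .of_taut₂ h (X.imp_of_mem hφX) fun _ h₁ h₂ hX => h₁ hX (h₂ hX)

end Atom

section disjAtoms

noncomputable def disjAtoms (R : Atom Φ → Prop) : MFml A P :=
  bigDisj ((Finset.univ.filter R).toList.map Atom.fml)

variable {R : Atom Φ → Prop} {φ : MFml A P}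

@[simp] theorem evalAtoms_disjAtoms {v : MFml A P → Prop} :
    (disjAtoms R).evalAtoms v ↔ ∃ X, R X ∧ X.fml.evalAtoms v := by
  simp [disjAtoms]

theorem imp_disjAtoms {X : Atom Φ} (h : R X) : MProofNL (X.fml.imp (disjAtoms R)) :=
  .of_taut fun _ hX => evalAtoms_disjAtoms.2 ⟨X, h, hX⟩

theorem disjAtoms_imp (h : ∀ X, R X → MProofNL (X.fml.imp φ)) :
    MProofNL ((disjAtoms R).imp φ) := by
  refine .of_taut_of_forall (Γ := (Finset.univ.filter R).toList.map (·.fml.imp φ))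
    (by simpa using h) fun v hΓ hR => ?_
  obtain ⟨X, hX, hXv⟩ := evalAtoms_disjAtoms.1 hR
  simp only [List.mem_map, Finset.mem_toList, Finset.mem_filter] at hΓ
  exact hΓ _ ⟨X, ⟨Finset.mem_univ X, hX⟩, rfl⟩ hXv

/-- Every classical valuation satisfies some complete conjunction of literals over `Φ`, and the
inconsistent ones are refutable. -/
theorem disjAtoms_true : MProofNL (disjAtoms fun _ : Atom Φ => True) := by
  refine .of_taut_of_forall
    (Γ := (Φ.powerset.filter fun s => ¬ Consistent (litConj Φ s)).toList.map
      fun s => (litConj Φ s).neg)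
    ?_ fun v hΓ => ?_
  · simp only [List.mem_map, Finset.mem_toList, Finset.mem_filter]
    rintro _ ⟨s, ⟨-, hs⟩, rfl⟩
    exact not_not.1 hs
  set s := Φ.filter (·.evalAtoms v)
  have hs : (litConj Φ s).evalAtoms v := evalAtoms_litConj.2 fun ψ hψ => by simp [s, hψ]
  by_cases hcon : Consistent (litConj Φ s)
  · exact evalAtoms_disjAtoms.2 ⟨⟨s, Finset.filter_subset _ _, hcon⟩, trivial, hs⟩
  · simp only [List.mem_map, Finset.mem_toList, Finset.mem_filter, Finset.mem_powerset] at hΓ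
    exact (hΓ _ ⟨s, ⟨Finset.filter_subset _ _, hcon⟩, rfl⟩ hs).elim

theorem exists_consistent_and (hφ : Consistent φ) :
    ∃ X : Atom Φ, Consistent (φ.and X.fml) := by
  by_contra! h
  have hX (X : Atom Φ) : MProofNL (X.fml.imp φ.neg) :=
    .of_taut₁ (not_not.1 (h X)) fun _ h hX hφ => h (evalAtoms_and.2 ⟨hφ, hX⟩)
  exact hφ (disjAtoms_true.mp (disjAtoms_imp fun X _ => hX X))

end disjAtoms

/-! ### The canonical model -/

noncomputable def canon (Φ : Finset (MFml A P)) : GStruct A P (Atom Φ) where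
  U _ _ := True
  rel a X Y := Consistent (X.fml.and (dia (.tv a) Y.fml))
  rel_sub _ _ _ _ := trivial
  val p X := .pv p ∈ X.carrier

noncomputable def Atom.succs (e : MTrm A P) (X : Atom Φ) : MFml A P :=
  disjAtoms (msemT (canon Φ) e X)

def TruthAt (Φ : Finset (MFml A P)) (φ : MFml A P) : Prop :=
  φ ∈ Φ → ∀ X : Atom Φ, msemF (canon Φ) φ X ↔ φ ∈ X.carrier

/-- The two halves of the Kozen–Parikh program lemma for `e`. -/
def ProgramLemma (Φ : Finset (MFml A P)) (e : MTrm A P) : Prop :=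
  ∀ χ, box e χ ∈ Φ →
    (∀ X Y : Atom Φ, box e χ ∈ X.carrier → msemT (canon Φ) e X Y → χ ∈ Y.carrier) ∧
      ∀ X : Atom Φ, MProofNL (X.fml.imp (box e (X.succs e)))

theorem ProgramLemma.imp_box {e : MTrm A P} {χ ψ : MFml A P} {X : Atom Φ}
    (he : ProgramLemma Φ e) (hχ : box e χ ∈ Φ)
    (h : ∀ Y, msemT (canon Φ) e X Y → MProofNL (Y.fml.imp ψ)) :
    MProofNL (X.fml.imp (box e ψ)) :=
  ((he χ hχ).2 X).imp_trans (.box_mono e (disjAtoms_imp h))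

theorem truthAt_imp (hΦ : FLClosed Φ) {φ ψ : MFml A P} (hφ : TruthAt Φ φ)
    (hψ : TruthAt Φ ψ) :
    TruthAt Φ (φ.imp ψ) := by
  intro himp X
  have hφΦ : φ ∈ Φ := hΦ.mem himp (by simp [flSucc])
  have hψΦ : ψ ∈ Φ := hΦ.mem himp (by simp [flSucc])
  rw [msemF, hφ hφΦ X, hψ hψΦ X, X.imp_mem_iff himp hφΦ hψΦ]

theorem truthAt_box (hΦ : FLClosed Φ) {e : MTrm A P} {χ : MFml A P} (he : ProgramLemma Φ e)
    (hχ : TruthAt Φ χ) :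
    TruthAt Φ (box e χ) := by
  intro hbox X
  have hχΦ := hΦ.mem hbox (mem_flSucc_box e χ)
  rw [msemF]
  refine ⟨fun h => (X.mem_iff_imp hbox).2 ?_,
    fun h Y hY => (hχ hχΦ Y).2 ((he χ hbox).1 X Y h hY)⟩
  exact he.imp_box hbox fun Y hY => Y.imp_of_mem ((hχ hχΦ Y).1 (h Y hY))

theorem truthAt_pv (p : P) : TruthAt Φ (.pv p) := fun _ _ => Iff.rfl

theorem truthAt_fls : TruthAt Φ .fls := fun _ X => iff_of_false id X.fls_not_mem

theorem programLemma_tv (hΦ : FLClosed Φ) (a : A) : ProgramLemma Φ (.tv a) := by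
  intro χ hbox
  refine ⟨fun X Y hX hXY => by_contra fun hY => hXY ?_, fun X => ?_⟩
  · have hχY := Y.imp_neg_of_not_mem (hΦ.mem hbox (mem_flSucc_box _ χ)) hY
    have hbox' : MProofNL ((box (.tv a) χ).imp (box (.tv a) Y.fml.neg)) :=
      .box_mono _ (.of_taut₁ hχY fun _ h hχ hY => h hY hχ)
    exact .of_taut₂ (X.imp_of_mem hX) hbox' fun _ h₁ h₂ hXY =>
      (evalAtoms_and.1 hXY).2 (h₂ (h₁ (evalAtoms_and.1 hXY).1))
  -- `X` proves `[a]¬Y` for every atom `Y` that is not an `a`-successor of `X`.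
  refine .imp_box_of_forall _ (Γ := disjAtoms (fun _ : Atom Φ => True) ::
    (Finset.univ.filter fun Y => ¬ msemT (canon Φ) (.tv a) X Y).toList.map (·.fml.neg)) ?_ ?_
  · simp only [List.mem_cons, List.mem_map, Finset.mem_toList, Finset.mem_filter]
    rintro _ (rfl | ⟨Y, ⟨-, hY⟩, rfl⟩)
    · exact .of_taut₁ (.nec _ disjAtoms_true) fun _ h _ => h
    · exact .of_taut₁ (not_not.1 hY) fun _ h hX =>
        by_contra fun hY => h (evalAtoms_and.2 ⟨hX, hY⟩)
  · intro v hv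
    simp only [List.mem_cons, List.mem_map, Finset.mem_toList, Finset.mem_filter,
      forall_eq_or_imp, evalAtoms_disjAtoms] at hv
    obtain ⟨⟨Y, -, hY⟩, hnot⟩ := hv
    exact evalAtoms_disjAtoms.2
      ⟨Y, by_contra fun h => hnot _ ⟨Y, ⟨Finset.mem_univ _, h⟩, rfl⟩ hY, hY⟩

theorem programLemma_comp (hΦ : FLClosed Φ) {e f : MTrm A P} (he : ProgramLemma Φ e)
    (hf : ProgramLemma Φ f) : ProgramLemma Φ (.comp e f) := by
  intro χ hbox
  have hef : box e (box f χ) ∈ Φ := hΦ.mem hbox (by simp [flSucc])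
  have hfχ : box f χ ∈ Φ := hΦ.mem hbox (by simp [flSucc])
  refine ⟨fun X Y hX ⟨Z, hXZ, hZY⟩ => ?_, fun X => ?_⟩
  · have hX' := X.mem_of_mem_of_imp hX (.iff_mp (.compAx e f χ)) hef
    exact (hf χ hfχ).1 Z Y ((he _ hef).1 X Z hX' hXZ) hZY
  · exact (he.imp_box hef fun Z hXZ => hf.imp_box hfχ fun Y hZY =>
      imp_disjAtoms ⟨Z, hXZ, hZY⟩).imp_trans (.iff_mpr (.compAx e f _))

theorem programLemma_union (hΦ : FLClosed Φ) {e f : MTrm A P} (he : ProgramLemma Φ e)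
    (hf : ProgramLemma Φ f) : ProgramLemma Φ (.union e f) := by
  intro χ hbox
  have heχ : box e χ ∈ Φ := hΦ.mem hbox (by simp [flSucc])
  have hfχ : box f χ ∈ Φ := hΦ.mem hbox (by simp [flSucc])
  have hunion := MProofNL.iff_mp (.unionAx e f χ)
  refine ⟨fun X Y hX hXY => ?_, fun X => ?_⟩
  · rcases hXY with hXY | hXY
    · exact (he χ heχ).1 X Y (X.mem_of_mem_of_imp hX hunion.imp_and_left heχ) hXY
    · exact (hf χ hfχ).1 X Y (X.mem_of_mem_of_imp hX hunion.imp_and_right hfχ) hXY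
  · exact (MProofNL.imp_and (he.imp_box heχ fun Y hY => imp_disjAtoms (Or.inl hY))
      (hf.imp_box hfχ fun Y hY => imp_disjAtoms (Or.inr hY))).imp_trans (.iff_mpr (.unionAx e f _))

theorem programLemma_plus (hΦ : FLClosed Φ) {e : MTrm A P} (he : ProgramLemma Φ e) :
    ProgramLemma Φ (.plus e) := by
  intro χ hbox
  have heχ : box e χ ∈ Φ := hΦ.mem hbox (by simp [flSucc])
  have heplus : box e (box (.plus e) χ) ∈ Φ := hΦ.mem hbox (by simp [flSucc])
  have hunfold := MProofNL.iff_mp (.plusAx e χ)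
  refine ⟨fun X Y hX hXY => ?_, fun X => ?_⟩
  · have step (U V : Atom Φ) (hU : box (.plus e) χ ∈ U.carrier)
        (hUV : msemT (canon Φ) e U V) :
        χ ∈ V.carrier ∧ box (.plus e) χ ∈ V.carrier :=
      ⟨(he χ heχ).1 U V (U.mem_of_mem_of_imp hU hunfold.imp_and_left heχ) hUV,
        (he _ heplus).1 U V (U.mem_of_mem_of_imp hU hunfold.imp_and_right heplus) hUV⟩
    suffices χ ∈ Y.carrier ∧ box (.plus e) χ ∈ Y.carrier from this.1
    induction hXY with
    | single h => exact step X _ hX h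
    | tail _ h ih => exact step _ _ ih.2 h
  -- `⁺-Ind` with the invariant `X.succs e⁺`.
  have hstep (Z : Atom Φ) (hZ : Z = X ∨ msemT (canon Φ) (.plus e) X Z) :
      MProofNL (Z.fml.imp (box e (X.succs (.plus e)))) :=
    he.imp_box heχ fun Y hZY => imp_disjAtoms <| by
      rcases hZ with rfl | hXZ
      exacts [.single hZY, .tail hXZ hZY]
  have hinv : MProofNL ((X.succs (.plus e)).imp (box e (X.succs (.plus e)))) :=
    disjAtoms_imp fun Z hZ => hstep Z (.inr hZ)
  exact (MProofNL.imp_and (hstep X (.inl rfl)) (.of_taut₁ (.nec _ hinv) fun _ h _ => h)).imp_trans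
    (.plusInd e _)

theorem programLemma_testL (hΦ : FLClosed Φ) {ψ : MFml A P} {e : MTrm A P} (hψ : TruthAt Φ ψ)
    (he : ProgramLemma Φ e) : ProgramLemma Φ (.testL ψ e) := by
  intro χ hbox
  have hψΦ : ψ ∈ Φ := hΦ.mem hbox (by simp [flSucc])
  have heχ : box e χ ∈ Φ := hΦ.mem hbox (by simp [flSucc])
  refine ⟨fun X Y hX ⟨hψX, hXY⟩ => ?_, fun X => ?_⟩
  · have hX' : MProofNL (X.fml.imp (box e χ)) :=
      .of_taut₂ ((X.imp_of_mem hX).imp_trans (.iff_mp (.testLAx ψ e χ)))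
        (X.imp_of_mem ((hψ hψΦ X).1 hψX)) fun _ h₁ h₂ hX => h₁ hX (h₂ hX)
    exact (he χ heχ).1 X Y ((X.mem_iff_imp heχ).2 hX') hXY
  · exact (X.imp_imp_of_mem hψΦ fun hψX => he.imp_box heχ fun Y hXY =>
      imp_disjAtoms ⟨(hψ hψΦ X).2 hψX, hXY⟩).imp_trans (.iff_mpr (.testLAx ψ e _))

theorem programLemma_testR (hΦ : FLClosed Φ) {e : MTrm A P} {ψ : MFml A P}
    (he : ProgramLemma Φ e) (hψ : TruthAt Φ ψ) : ProgramLemma Φ (.testR e ψ) := by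
  intro χ hbox
  have heimp : box e (ψ.imp χ) ∈ Φ := hΦ.mem hbox (by simp [flSucc])
  have himp : ψ.imp χ ∈ Φ := hΦ.mem hbox (by simp [flSucc])
  have hψΦ : ψ ∈ Φ := hΦ.mem himp (by simp [flSucc])
  have hχΦ : χ ∈ Φ := hΦ.mem hbox (mem_flSucc_box _ χ)
  refine ⟨fun X Y hX ⟨hXY, hψY⟩ => ?_, fun X => ?_⟩
  · have hY := (he _ heimp).1 X Y (X.mem_of_mem_of_imp hX (.iff_mp (.testRAx e ψ χ)) heimp) hXY
    exact (Y.imp_mem_iff himp hψΦ hχΦ).1 hY ((hψ hψΦ Y).1 hψY)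
  · exact (he.imp_box heimp fun Y hXY => Y.imp_imp_of_mem hψΦ fun hψY =>
      imp_disjAtoms ⟨hXY, (hψ hψΦ Y).2 hψY⟩).imp_trans (.iff_mpr (.testRAx e ψ _))

mutual
theorem truthAt_of_flClosed (hΦ : FLClosed Φ) : ∀ φ : MFml A P, TruthAt Φ φ
  | .pv p => truthAt_pv p
  | .fls => truthAt_fls
  | .imp φ ψ => truthAt_imp hΦ (truthAt_of_flClosed hΦ φ) (truthAt_of_flClosed hΦ ψ)
  | .box e χ => truthAt_box hΦ (programLemma_of_flClosed hΦ e) (truthAt_of_flClosed hΦ χ)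

theorem programLemma_of_flClosed (hΦ : FLClosed Φ) : ∀ e : MTrm A P, ProgramLemma Φ e
  | .tv a => programLemma_tv hΦ a
  | .comp e f =>
    programLemma_comp hΦ (programLemma_of_flClosed hΦ e) (programLemma_of_flClosed hΦ f)
  | .union e f =>
    programLemma_union hΦ (programLemma_of_flClosed hΦ e) (programLemma_of_flClosed hΦ f)
  | .plus e => programLemma_plus hΦ (programLemma_of_flClosed hΦ e)
  | .testL ψ e =>
    programLemma_testL hΦ (truthAt_of_flClosed hΦ ψ) (programLemma_of_flClosed hΦ e)
  | .testR e ψ =>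
    programLemma_testR hΦ (programLemma_of_flClosed hΦ e) (truthAt_of_flClosed hΦ ψ)
end

theorem exists_not_msemF_canon {φ : MFml A P} (h : ¬ MProofNL φ) :
    ∃ X : Atom (flClosure φ), ¬ msemF (canon (flClosure φ)) φ X := by
  obtain ⟨X, hX⟩ := exists_consistent_and (Φ := flClosure φ) (φ := φ.neg) fun hnn =>
    h (.of_taut₁ hnn fun _ => not_not.1)
  refine ⟨X, fun hφ => hX ?_⟩
  have hφX := (truthAt_of_flClosed (flClosed_flClosure φ) φ (mem_flClosure_self φ) X).1 hφ
  exact .of_taut₁ (X.imp_of_mem hφX) fun _ h hand =>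
    (evalAtoms_and.1 hand).1 (h (evalAtoms_and.1 hand).2)

end MFml

theorem identity_free_pdl_completeness_rel {A P : Type} (φ : MFml A P) :
    (∀ (W : Type) (S : GStruct A P W), Nonempty W → (∀ x y : W, S.U x y) →
      ∀ x : W, msemF S φ x) ↔ MProofNL φ := by
  refine ⟨fun hvalid => by_contra fun hφ => ?_, fun hφ _ S _ _ x => hφ.sound S x⟩
  obtain ⟨X, hX⟩ := MFml.exists_not_msemF_canon hφ
  exact hX (hvalid _ _ ⟨X⟩ (fun _ _ => trivial) X)
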